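/- Let G and H be Latin square graphs of Latin squares of the same order α ≥ 6, so each has n = α² vertices. Then G and H are not isomorphic if and only if every bijection π : V(G) → V(H) satisfies MMC(π) ≥ √n − 5 = α − 5. -/

import Mathlib

open SimpleGraph

section MismatchDefs

variable {V W : Type*}

/-- The mismatch graph `G^π − H`: the symmetric difference of the image of `G` under the
bijection `π` with `H`, as a graph on `V(H)`. Its edges are the positive edges
(edges of `G^π` not in `H`) together with the negative edges (edges of `H` not in `G^π`). -/
def mismatchGraph (G : SimpleGraph V) (H : SimpleGraph W) (π : V ≃ W) : SimpleGraph W :=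
  symmDiff (G.map π.toEmbedding) H

/-- The degree of a vertex in the mismatch graph `G^π − H`. -/
noncomputable def mismatchDeg (G : SimpleGraph V) (H : SimpleGraph W) (π : V ≃ W) (x : W) : ℕ :=
  ((mismatchGraph G H π).neighborSet x).ncard

/-- The number of positive edges of `G^π − H` incident to `x`. -/
noncomputable def posDeg (G : SimpleGraph V) (H : SimpleGraph W) (π : V ≃ W) (x : W) : ℕ :=
  ((G.map π.toEmbedding).neighborSet x \ H.neighborSet x).ncard

/-- The number of negative edges of `G^π − H` incident to `x`. -/
noncomputable def negDeg (G : SimpleGraph V) (H : SimpleGraph W) (π : V ≃ W) (x : W) : ℕ :=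
  (H.neighborSet x \ (G.map π.toEmbedding).neighborSet x).ncard

/-- The maximum mismatch count `MMC(π)`: the maximum degree of the mismatch graph `G^π − H`. -/
noncomputable def MMC [Fintype W] (G : SimpleGraph V) (H : SimpleGraph W) (π : V ≃ W) : ℕ :=
  Finset.univ.sup (mismatchDeg G H π)

/-- The edit mismatch norm `μ_edit(G^π, H)`: the number of edges of the mismatch graph. -/
noncomputable def muEdit (G : SimpleGraph V) (H : SimpleGraph W) (π : V ≃ W) : ℕ :=
  (mismatchGraph G H π).edgeSet.ncard

/-- The edit distance `δ_edit(G, H)`: the minimum of `μ_edit(G^π, H)` over all bijections. -/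
noncomputable def deltaEdit (G : SimpleGraph V) (H : SimpleGraph W) : ℕ :=
  ⨅ π : V ≃ W, muEdit G H π

open Classical in
/-- The signed adjacency matrix of the mismatch graph `G^π − H`:
`+1` on positive edges, `−1` on negative edges, `0` otherwise. -/
noncomputable def signedAdj (G : SimpleGraph V) (H : SimpleGraph W) (π : V ≃ W) :
    Matrix W W ℝ := fun x y =>
  if (G.map π.toEmbedding).Adj x y ∧ ¬ H.Adj x y then 1
  else if H.Adj x y ∧ ¬ (G.map π.toEmbedding).Adj x y then -1 else 0

/-- The `ℓ_p` norm of a vector over a finite index type. -/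
noncomputable def lpNorm [Fintype W] (p : ℝ) (x : W → ℝ) : ℝ :=
  (∑ i, |x i| ^ p) ^ p⁻¹

/-- The `ℓ_p`-operator norm of a matrix: `sup_{x ≠ 0} ‖Mx‖_p / ‖x‖_p`. -/
noncomputable def lpOpNorm [Fintype W] (p : ℝ) (M : Matrix W W ℝ) : ℝ :=
  ⨆ x : {x : W → ℝ // x ≠ 0}, lpNorm p (M.mulVec x.1) / lpNorm p x.1

end MismatchDefs

/-- `L` is a Latin square: each symbol occurs exactly once in each row and each column. -/
def IsLatinSquare {A : Type*} (L : A → A → A) : Prop :=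
  (∀ a, Function.Bijective (L a)) ∧ (∀ b, Function.Bijective fun a => L a b)

/-- The Latin square graph of `L`: its vertices are the cells of the array, and two
distinct cells are adjacent iff they lie in the same row, lie in the same column, or
contain the same symbol. -/
def latinSquareGraph {A : Type*} (L : A → A → A) : SimpleGraph (A × A) :=
  SimpleGraph.fromRel (fun c d => c.1 = d.1 ∨ c.2 = d.2 ∨ L c.1 c.2 = L d.1 d.2)

/-!
An isomorphism has an empty mismatch graph, so `MMC = 0 < α - 5`. Conversely, `G^π` and `H`
are both `3(α - 1)`-regular, adjacent vertices have at least `α` and distinct non-adjacent ones at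
most `6` common neighbours. Regularity gives every vertex as many positive as negative mismatch
edges, so at most `MMC / 2` of each. If `x ~ y` in `G^π` but not in `H`, each of their at
least `α` common `G^π`-neighbours is a common `H`-neighbour or ends a positive mismatch edge at
`x` or `y` other than `xy`, whence `α ≤ 6 + MMC - 2`. So `MMC ≤ α - 6` forces `G^π ≤ H`, and symmetrically
`H ≤ G^π`.
-/

namespace SimpleGraph

variable {V W : Type*}

theorem neighborSet_symmDiff (G₁ G₂ : SimpleGraph V) (v : V) :
    (symmDiff G₁ G₂).neighborSet v = symmDiff (G₁.neighborSet v) (G₂.neighborSet v) := by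
  simp only [symmDiff_def, neighborSet_sup, neighborSet_sdiff, Set.sup_eq_union]

theorem two_mul_ncard_neighborSet_sdiff [Finite V] {G H : SimpleGraph V} {v : V}
    (h : (G.neighborSet v).ncard = (H.neighborSet v).ncard) :
    2 * (G.neighborSet v \ H.neighborSet v).ncard = ((symmDiff G H).neighborSet v).ncard := by
  rw [neighborSet_symmDiff, Set.symmDiff_def, Set.ncard_union_eq disjoint_sdiff_sdiff,
    ← (Set.ncard_eq_ncard_iff_ncard_sdiff_eq_ncard_sdiff).1 h, two_mul]

theorem Iso.image_commonNeighbors {G : SimpleGraph V} {G' : SimpleGraph W} (φ : G ≃g G')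
    (v w : V) : φ '' G.commonNeighbors v w = G'.commonNeighbors (φ v) (φ w) := by
  rw [commonNeighbors, Set.image_inter φ.injective, φ.image_neighborSet, φ.image_neighborSet,
    commonNeighbors]

theorem Iso.map_toEmbedding_eq {G : SimpleGraph V} {G' : SimpleGraph W} (φ : G ≃g G') :
    G.map φ.toEquiv.toEmbedding = G' := by
  ext x y
  obtain ⟨a, rfl⟩ := φ.surjective x
  obtain ⟨b, rfl⟩ := φ.surjective y
  exact (map_adj_apply (f := φ.toEquiv.toEmbedding)).trans φ.map_adj_iff.symm

structure IsSRGWithBounds (G : SimpleGraph V) (k ℓ μ : ℕ) : Prop where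
  ncard_neighborSet : ∀ v, (G.neighborSet v).ncard = k
  le_ncard_commonNeighbors : ∀ ⦃v w⦄, G.Adj v w → ℓ ≤ (G.commonNeighbors v w).ncard
  ncard_commonNeighbors_le :
    ∀ ⦃v w⦄, v ≠ w → ¬ G.Adj v w → (G.commonNeighbors v w).ncard ≤ μ

namespace IsSRGWithBounds

variable {G : SimpleGraph V} {k ℓ μ : ℕ}

theorem of_iso (hG : G.IsSRGWithBounds k ℓ μ) {G' : SimpleGraph W} (φ : G ≃g G') :
    G'.IsSRGWithBounds k ℓ μ where
  ncard_neighborSet := φ.surjective.forall.2 fun v => by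
    rw [← φ.image_neighborSet, Set.ncard_image_of_injective _ φ.injective, hG.ncard_neighborSet]
  le_ncard_commonNeighbors := φ.surjective.forall₂.2 fun v w h => by
    rw [← φ.image_commonNeighbors, Set.ncard_image_of_injective _ φ.injective]
    exact hG.le_ncard_commonNeighbors (φ.map_adj_iff.1 h)
  ncard_commonNeighbors_le := φ.surjective.forall₂.2 fun v w hne h => by
    rw [← φ.image_commonNeighbors, Set.ncard_image_of_injective _ φ.injective]
    exact hG.ncard_commonNeighbors_le (φ.injective.ne_iff.1 hne) (mt φ.map_adj_iff.2 h)

variable [Finite V] {H : SimpleGraph V} {ℓ' μ' D : ℕ}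

theorem le_of_ncard_neighborSet_symmDiff_le (hG : G.IsSRGWithBounds k ℓ μ')
    (hH : H.IsSRGWithBounds k ℓ' μ) (hD : ∀ v, ((symmDiff G H).neighborSet v).ncard ≤ D)
    (hDμℓ : D + μ ≤ ℓ + 1) : G ≤ H := by
  intro x y hxy
  by_contra hny
  set P : V → Set V := fun v => G.neighborSet v \ H.neighborSet v
  have hP : ∀ v, 2 * (P v).ncard ≤ D := fun v =>
    (two_mul_ncard_neighborSet_sdiff (by rw [hG.ncard_neighborSet, hH.ncard_neighborSet])).trans_le
      (hD v)
  have hyP : y ∈ P x := ⟨hxy, hny⟩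
  have hxP : x ∈ P y := ⟨hxy.symm, fun h => hny h.symm⟩
  have hsub : G.commonNeighbors x y ⊆ H.commonNeighbors x y ∪ (P x \ {y}) ∪ (P y \ {x}) := by
    rintro z ⟨hxz, hyz⟩
    by_cases hx : H.Adj x z
    · by_cases hy : H.Adj y z
      · exact Or.inl (Or.inl ⟨hx, hy⟩)
      · exact Or.inr ⟨⟨hyz, hy⟩, hxz.ne'⟩
    · exact Or.inl (Or.inr ⟨⟨hxz, hx⟩, hyz.ne'⟩)
  have hcount : ℓ ≤ μ + ((P x).ncard - 1) + ((P y).ncard - 1) :=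
    calc ℓ ≤ (G.commonNeighbors x y).ncard := hG.le_ncard_commonNeighbors hxy
      _ ≤ (H.commonNeighbors x y ∪ (P x \ {y}) ∪ (P y \ {x})).ncard := Set.ncard_le_ncard hsub
      _ ≤ (H.commonNeighbors x y).ncard + (P x \ {y}).ncard + (P y \ {x}).ncard :=
        (Set.ncard_union_le _ _).trans (Nat.add_le_add_right (Set.ncard_union_le _ _) _)
      _ ≤ _ := by
        rw [Set.ncard_sdiff_singleton_of_mem hyP, Set.ncard_sdiff_singleton_of_mem hxP]
        gcongr
        exact hH.ncard_commonNeighbors_le hxy.ne hny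
  have := hP x
  have := hP y
  have := (Set.ncard_pos).2 ⟨y, hyP⟩
  have := (Set.ncard_pos).2 ⟨x, hxP⟩
  omega

theorem eq_of_ncard_neighborSet_symmDiff_le (hG : G.IsSRGWithBounds k ℓ μ)
    (hH : H.IsSRGWithBounds k ℓ μ) (hD : ∀ v, ((symmDiff G H).neighborSet v).ncard ≤ D)
    (hDμℓ : D + μ ≤ ℓ + 1) : G = H :=
  le_antisymm (hG.le_of_ncard_neighborSet_symmDiff_le hH hD hDμℓ)
    (hH.le_of_ncard_neighborSet_symmDiff_le hG (by rwa [symmDiff_comm]) hDμℓ)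

end IsSRGWithBounds

end SimpleGraph

section LatinSquareGraph

variable {A : Type*} {L : A → A → A}

-- Rows, columns and symbols are the three coordinates of a cell; any two of them determine it.
def cellCoord (L : A → A → A) (i : Fin 3) (c : A × A) : A := ![c.1, c.2, L c.1 c.2] i

theorem IsLatinSquare.eq_of_cellCoord_eq (hL : IsLatinSquare L) {i j : Fin 3} (hij : i ≠ j)
    {c d : A × A} (hi : cellCoord L i c = cellCoord L i d)
    (hj : cellCoord L j c = cellCoord L j d) : c = d := by
  obtain ⟨c₁, c₂⟩ := c
  obtain ⟨d₁, d₂⟩ := d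
  fin_cases i <;> fin_cases j <;>
    simp_all [cellCoord, (hL.1 _).injective.eq_iff, (hL.2 _).injective.eq_iff]

theorem IsLatinSquare.exists_cellCoord_eq (hL : IsLatinSquare L) {i j : Fin 3} (hij : i ≠ j)
    (a b : A) : ∃ c, cellCoord L i c = a ∧ cellCoord L j c = b := by
  fin_cases i <;> fin_cases j <;>
    simp [cellCoord, (hL.1 _).surjective _, (hL.2 _).surjective _] at hij ⊢

theorem latinSquareGraph_adj {c d : A × A} :
    (latinSquareGraph L).Adj c d ↔ c ≠ d ∧ ∃ i, cellCoord L i c = cellCoord L i d := by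
  simp [latinSquareGraph, Fin.exists_fin_succ, cellCoord, eq_comm]

def cellLine (L : A → A → A) (i : Fin 3) (c : A × A) : Set (A × A) :=
  {d | cellCoord L i d = cellCoord L i c}

theorem IsLatinSquare.ncard_cellLine [Fintype A] (hL : IsLatinSquare L) (i : Fin 3)
    (c : A × A) : (cellLine L i c).ncard = Fintype.card A := by
  obtain ⟨j, hji⟩ := exists_ne i
  rw [← Nat.card_eq_fintype_card, ← Set.ncard_univ]
  refine Set.ncard_congr (fun d _ => cellCoord L j d) (fun _ _ => trivial)
    (fun d e hd he h => hL.eq_of_cellCoord_eq hji.symm (hd.trans he.symm) h) fun b _ => ?_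
  obtain ⟨d, hdi, hdj⟩ := hL.exists_cellCoord_eq hji.symm (cellCoord L i c) b
  exact ⟨d, hdi, hdj⟩

theorem IsLatinSquare.ncard_neighborSet_latinSquareGraph [Fintype A] (hL : IsLatinSquare L)
    (c : A × A) :
    ((latinSquareGraph L).neighborSet c).ncard = 3 * (Fintype.card A - 1) := by
  have hunion : (latinSquareGraph L).neighborSet c = ⋃ i, (cellLine L i c \ {c}) := by
    ext d
    simp [latinSquareGraph_adj, cellLine, eq_comm, and_comm]
  have hdisj : Pairwise (Function.onFun Disjoint fun i => cellLine L i c \ {c}) := by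
    intro i j hij
    rw [Function.onFun, Set.disjoint_left]
    rintro d ⟨hi, hdc⟩ ⟨hj, -⟩
    exact hdc (hL.eq_of_cellCoord_eq hij hi hj)
  rw [hunion, Set.ncard_iUnion_of_finite (fun _ => Set.toFinite _) hdisj]
  simp only [finsum_eq_sum_of_fintype,
    Set.ncard_sdiff_singleton_of_mem (show c ∈ cellLine L _ c from rfl), hL.ncard_cellLine,
    Finset.sum_const, Finset.card_univ, Fintype.card_fin, smul_eq_mul]

theorem IsLatinSquare.mem_commonNeighbors_sdiff_cellLine (hL : IsLatinSquare L)
    {i j k : Fin 3} (hij : i ≠ j) (hik : i ≠ k) {c d e : A × A} (hne : c ≠ d)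
    (hcd : cellCoord L i c = cellCoord L i d) (hj : cellCoord L j e = cellCoord L j c)
    (hk : cellCoord L k e = cellCoord L k d) :
    e ∈ (latinSquareGraph L).commonNeighbors c d \ cellLine L i c := by
  have hec : e ≠ c := by rintro rfl; exact hne (hL.eq_of_cellCoord_eq hik hcd hk)
  have hed : e ≠ d := by rintro rfl; exact hne (hL.eq_of_cellCoord_eq hij hcd hj.symm)
  exact ⟨(mem_commonNeighbors _).2 ⟨latinSquareGraph_adj.2 ⟨hec.symm, j, hj.symm⟩,
    latinSquareGraph_adj.2 ⟨hed.symm, k, hk.symm⟩⟩,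
    fun hi => hec (hL.eq_of_cellCoord_eq hij hi hj)⟩

theorem IsLatinSquare.card_le_ncard_commonNeighbors_latinSquareGraph [Fintype A]
    (hL : IsLatinSquare L)
    {c d : A × A} (h : (latinSquareGraph L).Adj c d) :
    Fintype.card A ≤ ((latinSquareGraph L).commonNeighbors c d).ncard := by
  obtain ⟨hne, i, hcd⟩ := latinSquareGraph_adj.1 h
  obtain ⟨j, k, hij, hik, hjk⟩ : ∃ j k : Fin 3, i ≠ j ∧ i ≠ k ∧ j ≠ k := by
    fin_cases i <;> decide
  obtain ⟨e, hej, hek⟩ := hL.exists_cellCoord_eq hjk (cellCoord L j c) (cellCoord L k d)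
  obtain ⟨e', he'k, he'j⟩ := hL.exists_cellCoord_eq hjk.symm (cellCoord L k c) (cellCoord L j d)
  have he := hL.mem_commonNeighbors_sdiff_cellLine hij hik hne hcd hej hek
  have he' := hL.mem_commonNeighbors_sdiff_cellLine hik hij hne hcd he'k he'j
  have hee' : e ≠ e' := fun hee =>
    hne (hL.eq_of_cellCoord_eq hij hcd (by rw [← hej, hee, he'j]))
  set S := cellLine L i c \ {c, d}
  have hS : S ⊆ (latinSquareGraph L).commonNeighbors c d := by
    rintro z ⟨hz, hzcd⟩
    simp only [Set.mem_insert_iff, Set.mem_singleton_iff, not_or] at hzcd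
    exact (mem_commonNeighbors _).2 ⟨latinSquareGraph_adj.2 ⟨Ne.symm hzcd.1, i, hz.symm⟩,
      latinSquareGraph_adj.2 ⟨Ne.symm hzcd.2, i, hcd.symm.trans hz.symm⟩⟩
  have hcd_sub : {c, d} ⊆ cellLine L i c :=
    Set.insert_subset rfl (Set.singleton_subset_iff.2 hcd.symm)
  have hcardS : S.ncard = Fintype.card A - 2 := by
    rw [Set.ncard_sdiff hcd_sub, Set.ncard_pair hne, hL.ncard_cellLine]
  have htwo : 2 ≤ Fintype.card A := by
    simpa [Set.ncard_pair hne, hL.ncard_cellLine] using Set.ncard_le_ncard hcd_sub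
  calc Fintype.card A = (insert e (insert e' S)).ncard := by
        rw [Set.ncard_insert_of_notMem, Set.ncard_insert_of_notMem]
        · omega
        · exact fun h => he'.2 (Set.sdiff_subset h)
        · rintro (h | h)
          exacts [hee' h, he.2 (Set.sdiff_subset h)]
    _ ≤ _ := Set.ncard_le_ncard (Set.insert_subset he.1 (Set.insert_subset he'.1 hS))

theorem IsLatinSquare.ncard_commonNeighbors_le_six_latinSquareGraph [Finite A]
    (hL : IsLatinSquare L)
    {c d : A × A} (hne : c ≠ d) (h : ¬ (latinSquareGraph L).Adj c d) :
    ((latinSquareGraph L).commonNeighbors c d).ncard ≤ 6 := by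
  set S : {p : Fin 3 × Fin 3 // p.1 ≠ p.2} → Set (A × A) := fun p =>
    {z | cellCoord L p.1.1 z = cellCoord L p.1.1 c ∧ cellCoord L p.1.2 z = cellCoord L p.1.2 d}
  have hsub : (latinSquareGraph L).commonNeighbors c d ⊆ ⋃ p, S p := by
    intro z hz
    obtain ⟨⟨-, i, hi⟩, ⟨-, j, hj⟩⟩ :=
      ((mem_commonNeighbors _).1 hz).imp latinSquareGraph_adj.1 latinSquareGraph_adj.1
    have hij : i ≠ j := by
      rintro rfl
      exact h (latinSquareGraph_adj.2 ⟨hne, i, hi.trans hj.symm⟩)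
    exact Set.mem_iUnion.2 ⟨⟨(i, j), hij⟩, hi.symm, hj.symm⟩
  have hS : ∀ p, (S p).ncard ≤ 1 := fun p => (Set.ncard_le_one_iff).2 fun hz hz' =>
    hL.eq_of_cellCoord_eq p.2 (hz.1.trans hz'.1.symm) (hz.2.trans hz'.2.symm)
  calc _ ≤ (⋃ p, S p).ncard := Set.ncard_le_ncard hsub
    _ ≤ ∑ p, (S p).ncard := Set.ncard_iUnion_le_of_fintype S
    _ ≤ ∑ _p, 1 := Finset.sum_le_sum fun p _ => hS p
    _ = 6 := by simp; decide

theorem IsLatinSquare.isSRGWithBounds_latinSquareGraph [Fintype A] (hL : IsLatinSquare L) :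
    (latinSquareGraph L).IsSRGWithBounds (3 * (Fintype.card A - 1)) (Fintype.card A) 6 where
  ncard_neighborSet := hL.ncard_neighborSet_latinSquareGraph
  le_ncard_commonNeighbors _ _ := hL.card_le_ncard_commonNeighbors_latinSquareGraph
  ncard_commonNeighbors_le _ _ := hL.ncard_commonNeighbors_le_six_latinSquareGraph

end LatinSquareGraph

theorem mismatchDeg_le_MMC {V W : Type*} [Fintype W] (G : SimpleGraph V) (H : SimpleGraph W)
    (π : V ≃ W) (w : W) : mismatchDeg G H π w ≤ MMC G H π :=
  Finset.le_sup (Finset.mem_univ w)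

theorem MMC_eq_zero_of_iso {V W : Type*} [Fintype W] {G : SimpleGraph V} {H : SimpleGraph W}
    (φ : G ≃g H) : MMC G H φ.toEquiv = 0 := by
  have hbot : mismatchGraph G H φ.toEquiv = ⊥ := by
    rw [mismatchGraph, φ.map_toEmbedding_eq, symmDiff_self]
  simp [MMC, mismatchDeg, hbot]

/-- Let `G` and `H` be Latin square graphs of Latin squares of the same
order `α ≥ 6` (so each has `n = α²` vertices). Then `G` and `H` are not isomorphic if and
only if every bijection `π` satisfies `MMC(π) ≥ √n − 5 = α − 5`. -/
theorem statement_17 {A B : Type*} [Fintype A] [Fintype B]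
    (α : ℕ) (hα : 6 ≤ α) (hcA : Fintype.card A = α) (hcB : Fintype.card B = α)
    (L₁ : A → A → A) (L₂ : B → B → B)
    (hL₁ : IsLatinSquare L₁) (hL₂ : IsLatinSquare L₂) :
    (¬ Nonempty (latinSquareGraph L₁ ≃g latinSquareGraph L₂)) ↔
      ∀ π : (A × A) ≃ (B × B),
        α - 5 ≤ MMC (latinSquareGraph L₁) (latinSquareGraph L₂) π := by
  have hG₁ := hL₁.isSRGWithBounds_latinSquareGraph
  have hG₂ := hL₂.isSRGWithBounds_latinSquareGraph
  rw [hcA] at hG₁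
  rw [hcB] at hG₂
  constructor
  · intro hniso π
    by_contra! hlt
    have hmap : (latinSquareGraph L₁).map π.toEmbedding = latinSquareGraph L₂ :=
      (hG₁.of_iso (Iso.map π _)).eq_of_ncard_neighborSet_symmDiff_le hG₂
        (mismatchDeg_le_MMC _ _ π) (by omega)
    exact hniso ⟨hmap ▸ Iso.map π _⟩
  · rintro h ⟨φ⟩
    have := h φ.toEquiv
    rw [MMC_eq_zero_of_iso] at this
    omega
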